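/- Let M := max_{x∈V} d_x^{-1/2}. For all λ, μ > 0 and all x, y ∈ V, the inequality |KD_λ(x,y) − KD_μ(x,y)| ≤ 2·M·vol(V)^{1/2}·|λ − μ| holds. -/

import Mathlib

open scoped BigOperators

noncomputable section

namespace HypRicci

variable {V : Type*} [Fintype V] [DecidableEq V]

/-- A finite weighted hypergraph on vertex set `V`: a finite set of nonempty
hyperedges together with positive weights. -/
structure Hypergraph (V : Type*) [Fintype V] [DecidableEq V] : Type _ where
  E : Finset (Finset V)
  w : Finset V → ℝ
  w_pos : ∀ e ∈ E, 0 < w e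
  e_nonempty : ∀ e ∈ E, e.Nonempty

/-- Degree `d_x = ∑_{e ∋ x} w(e)`. -/
def deg (H : Hypergraph V) (x : V) : ℝ := ∑ e ∈ H.E, if x ∈ e then H.w e else 0

/-- Volume `vol(V) = ∑_x d_x`. -/
def vol (H : Hypergraph V) : ℝ := ∑ x, deg H x

/-- Weighted inner product `⟨f,g⟩ = ∑_x f(x) g(x) / d_x`. -/
def inn (H : Hypergraph V) (f g : V → ℝ) : ℝ := ∑ x, f x * g x / deg H x

/-- Norm associated to `inn`. -/
def nrm (H : Hypergraph V) (f : V → ℝ) : ℝ := Real.sqrt (inn H f f)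

/-- Indicator function `δ_x`. -/
def delta (x : V) : V → ℝ := fun z => if z = x then 1 else 0

/-- Standard (unweighted) dot product `u^⊤ v`. -/
def dot (u v : V → ℝ) : ℝ := ∑ x, u x * v x

/-- Base polytope `B_e = conv{δ_x − δ_y : x,y ∈ e}`. -/
def Bp (e : Finset V) : Set (V → ℝ) :=
  convexHull ℝ {b : V → ℝ | ∃ x ∈ e, ∃ y ∈ e, b = delta x - delta y}

/-- The multivalued hypergraph Laplacian
`L(f) = {∑_e w(e) (b_e^⊤ f) b_e : b_e ∈ argmax_{b ∈ B_e} b^⊤ f}`. -/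
def Lap (H : Hypergraph V) (f : V → ℝ) : Set (V → ℝ) :=
  { g | ∃ b : Finset V → (V → ℝ),
      (∀ e ∈ H.E, b e ∈ Bp e ∧ ∀ b' ∈ Bp e, dot b' f ≤ dot (b e) f) ∧
      g = ∑ e ∈ H.E, (H.w e * dot (b e) f) • b e }

/-- `D⁻¹ f`. -/
def Dinv (H : Hypergraph V) (f : V → ℝ) : V → ℝ := fun x => f x / deg H x

/-- Normalized Laplacian `𝓛(f) = L(D⁻¹ f)`. -/
def NL (H : Hypergraph V) (f : V → ℝ) : Set (V → ℝ) := Lap H (Dinv H f)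

/-- The resolvent `J_λ = (I + λ𝓛)⁻¹`: it sends `f` to the (unique) `g` with
`f ∈ g + λ 𝓛(g)`. -/
def Resolvent (H : Hypergraph V) (l : ℝ) (f : V → ℝ) : V → ℝ :=
  Classical.epsilon fun g => ∃ h ∈ NL H g, f = g + l • h

/-- Adjacency: `x ∼ y` iff some hyperedge contains both. -/
def Adj (H : Hypergraph V) (x y : V) : Prop := ∃ e ∈ H.E, x ∈ e ∧ y ∈ e

/-- There is a chain of length `n` of successively adjacent vertices from `x` to `y`. -/
def chainProp (H : Hypergraph V) (x y : V) (n : ℕ) : Prop :=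
  ∃ z : ℕ → V, z 0 = x ∧ z n = y ∧ ∀ i < n, Adj H (z i) (z (i + 1))

/-- Connectedness of the hypergraph. -/
def Connected (H : Hypergraph V) : Prop := ∀ x y : V, ∃ n, chainProp H x y n

/-- Graph distance (as a natural number). -/
def hdistN (H : Hypergraph V) (x y : V) : ℕ := sInf {n | chainProp H x y n}

/-- Graph distance `d(x,y)` as a real number. -/
def gdist (H : Hypergraph V) (x y : V) : ℝ := (hdistN H x y : ℝ)

/-- Diameter `diam(H) = max_{x,y} d(x,y)`. -/
def hdiam (H : Hypergraph V) : ℝ :=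
  (((Finset.univ : Finset (V × V)).sup fun p => hdistN H p.1 p.2 : ℕ) : ℝ)

/-- Weighted `1`-Lipschitz functions: `⟨f, δ_x − δ_y⟩ ≤ d(x,y)` for all `x, y`. -/
def Lip1 (H : Hypergraph V) : Set (V → ℝ) :=
  { f | ∀ x y : V, inn H f (delta x - delta y) ≤ gdist H x y }

/-- The `λ`-nonlinear Kantorovich difference. -/
def KD (H : Hypergraph V) (l : ℝ) (x y : V) : ℝ :=
  sSup { r | ∃ f ∈ Lip1 H, r = inn H (Resolvent H l f) (delta x - delta y) }

/-- `κ_λ(x,y) = 1 − KD_λ(x,y)/d(x,y)`. -/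
def kappa (H : Hypergraph V) (l : ℝ) (x y : V) : ℝ := 1 - KD H l x y / gdist H x y

/-- Lower coarse Ricci curvature `κ̲(x,y) = liminf_{λ↓0} κ_λ(x,y)/λ`. -/
def kappaLower (H : Hypergraph V) (x y : V) : EReal :=
  Filter.liminf (fun l : ℝ => ((kappa H l x y / l : ℝ) : EReal)) (nhdsWithin 0 (Set.Ioi 0))

/-- Upper coarse Ricci curvature `κ̄(x,y) = limsup_{λ↓0} κ_λ(x,y)/λ`. -/
def kappaUpper (H : Hypergraph V) (x y : V) : EReal :=
  Filter.limsup (fun l : ℝ => ((kappa H l x y / l : ℝ) : EReal)) (nhdsWithin 0 (Set.Ioi 0))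

/-- Canonical restriction `𝓛⁰ f`: the unique element of minimal norm of `𝓛(f)`. -/
def L0 (H : Hypergraph V) (f : V → ℝ) : V → ℝ :=
  Classical.epsilon fun g => g ∈ NL H f ∧ ∀ h ∈ NL H f, nrm H g ≤ nrm H h

/-- The stationary distribution `π(x) = d_x / vol(V)`. -/
def piH (H : Hypergraph V) : V → ℝ := fun x => deg H x / vol H

/-- The energy `Q(h) = (1/2) ∑_e w(e) max_{x,y ∈ e} (h(x) − h(y))²`. -/
def Qform (H : Hypergraph V) (h : V → ℝ) : ℝ :=
  (1 / 2) * ∑ e ∈ H.E, H.w e * sSup { r | ∃ x ∈ e, ∃ y ∈ e, r = (h x - h y) ^ 2 }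

/-! Under the isometry `f ↦ D^{-1/2} f` onto Euclidean space, `𝓛` is a monotone operator. So if
`f = J_λ f + λ h = J_μ f + μ h'` with `h ∈ 𝓛(J_λ f)`, `h' ∈ 𝓛(J_μ f)`, then
`‖J_λ f - J_μ f‖ ≤ |λ - μ| ‖h‖`, and `‖h‖ ≤ ‖h₀‖` for every `h₀ ∈ 𝓛 f`. For weighted 1-Lipschitz
`f`, `D⁻¹ f` varies by at most `1` on each hyperedge, whence `‖h₀‖ ≤ √(2 vol V)`. Together with
`‖δ_x - δ_y‖ ≤ √2 M` and Cauchy–Schwarz this bounds `⟨J_λ f - J_μ f, δ_x - δ_y⟩` by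
`2 M √(vol V) |λ - μ|` uniformly in `f`, and the bound passes to the suprema.

The resolvent exists: a minimiser `u` of a coercive energy satisfies `f - D u ∈ λ L(u)`, and
`J_λ f = D u`.
-/

open Filter Topology

set_option linter.unusedSectionVars false

section InnerProductSpace

variable {E : Type*} [NormedAddCommGroup E] [InnerProductSpace ℝ E]

lemma norm_le_of_eq_add_smul_of_inner_nonneg {f g h h₀ : E} {l : ℝ} (hl : 0 < l)
    (hf : f = g + l • h) (hmono : 0 ≤ inner ℝ (h - h₀) (g - f)) : ‖h‖ ≤ ‖h₀‖ := by
  have hgf : g - f = -(l • h) := by rw [hf]; abel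
  rw [hgf, inner_neg_right, inner_smul_right, inner_sub_left, real_inner_self_eq_norm_sq] at hmono
  have hsq : ‖h‖ ^ 2 ≤ ‖h₀‖ * ‖h‖ :=
    (by nlinarith : ‖h‖ ^ 2 ≤ inner ℝ h₀ h).trans (real_inner_le_norm h₀ h)
  nlinarith [norm_nonneg h, norm_nonneg h₀]

lemma norm_sub_le_of_add_smul_eq {g₁ g₂ h₁ h₂ : E} {l m : ℝ} (hm : 0 ≤ m)
    (heq : g₁ + l • h₁ = g₂ + m • h₂) (hmono : 0 ≤ inner ℝ (h₁ - h₂) (g₁ - g₂)) :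
    ‖g₁ - g₂‖ ≤ |l - m| * ‖h₁‖ := by
  have hg : g₁ - g₂ = m • (h₂ - h₁) + (m - l) • h₁ := by
    rw [smul_sub, sub_smul, ← sub_eq_iff_eq_add.2 heq.symm]; abel
  have hsq : ‖g₁ - g₂‖ ^ 2 ≤ (m - l) * inner ℝ h₁ (g₁ - g₂) := by
    rw [← real_inner_self_eq_norm_sq]
    conv_lhs => enter [2]; rw [hg]
    rw [inner_add_left, inner_smul_left, inner_smul_left, ← neg_sub h₁ h₂, inner_neg_left]
    simp only [conj_trivial]
    nlinarith
  have hcs : (m - l) * inner ℝ h₁ (g₁ - g₂) ≤ |l - m| * ‖h₁‖ * ‖g₁ - g₂‖ := by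
    rw [mul_assoc, abs_sub_comm]
    exact (le_abs_self _).trans <| by
      rw [abs_mul]; exact mul_le_mul_of_nonneg_left (abs_real_inner_le_norm _ _) (abs_nonneg _)
  nlinarith [norm_nonneg (g₁ - g₂), mul_nonneg (abs_nonneg (l - m)) (norm_nonneg h₁)]

end InnerProductSpace

lemma csSup_le_csSup_add {ι : Type*} {S : Set ι} {F G : ι → ℝ} {c : ℝ} (hS : S.Nonempty)
    (hG : BddAbove {r | ∃ i ∈ S, r = G i}) (h : ∀ i ∈ S, F i ≤ G i + c) :
    sSup {r | ∃ i ∈ S, r = F i} ≤ sSup {r | ∃ i ∈ S, r = G i} + c := by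
  obtain ⟨i, hi⟩ := hS
  refine csSup_le ⟨_, i, hi, rfl⟩ ?_
  rintro _ ⟨j, hj, rfl⟩
  exact (h j hj).trans (add_le_add_left (le_csSup hG ⟨j, hj, rfl⟩) c)

lemma sum_le_sum_add_mul_add_sq_mul {ι : Type*} {s : Finset ι} {X a b c : ι → ℝ} {t : ℝ}
    (h : ∀ i ∈ s, X i ≤ a i + t * b i + t ^ 2 * c i) :
    ∑ i ∈ s, X i ≤ ∑ i ∈ s, a i + t * ∑ i ∈ s, b i + t ^ 2 * ∑ i ∈ s, c i :=
  (Finset.sum_le_sum h).trans_eq (by simp only [Finset.sum_add_distrib, Finset.mul_sum])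

lemma nonneg_of_eventually_nonneg_mul_add_sq_mul {D C : ℝ}
    (h : ∀ᶠ t in 𝓝[>] (0 : ℝ), 0 ≤ t * D + t ^ 2 * C) : 0 ≤ D := by
  by_contra! hD
  have hlim : Tendsto (fun t : ℝ => D + t * C) (𝓝 0) (𝓝 D) :=
    (by fun_prop : Continuous fun t : ℝ => D + t * C).tendsto' 0 _ (by simp)
  obtain ⟨t, hnonneg, hneg, ht⟩ := (h.and <| ((hlim.eventually (eventually_lt_nhds hD)).filter_mono
    nhdsWithin_le_nhds).and self_mem_nhdsWithin).exists
  have ht : (0 : ℝ) < t := ht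
  nlinarith

variable {H : Hypergraph V}

lemma deg_nonneg (H : Hypergraph V) (x : V) : 0 ≤ deg H x :=
  Finset.sum_nonneg fun e he => by split_ifs <;> simp [(H.w_pos e he).le]

lemma delta_eq_single (x : V) : delta x = Pi.single x 1 := by
  ext z; simp [delta, Pi.single_apply]

lemma dot_eq_dotProduct (u v : V → ℝ) : dot u v = u ⬝ᵥ v := rfl

lemma dot_delta_sub (x y : V) (u : V → ℝ) : dot (delta x - delta y) u = u x - u y := by
  simp [dot_eq_dotProduct, delta_eq_single, sub_dotProduct]

lemma inn_comm (f g : V → ℝ) : inn H f g = inn H g f := by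
  simp only [inn, mul_comm]

lemma inn_eq_dot (p q : V → ℝ) : inn H p q = dot p (Dinv H q) := by
  simp only [inn, dot, Dinv, mul_div_assoc]

lemma inn_delta_sub (f : V → ℝ) (x y : V) :
    inn H f (delta x - delta y) = Dinv H f x - Dinv H f y := by
  rw [inn_comm, inn_eq_dot, dot_delta_sub]

def toEuclidean (H : Hypergraph V) : (V → ℝ) →ₗ[ℝ] EuclideanSpace ℝ V where
  toFun f := WithLp.toLp 2 fun x => f x / Real.sqrt (deg H x)
  map_add' f g := by ext x; simp [add_div]
  map_smul' c f := by ext x; simp [mul_div_assoc]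

lemma inner_toEuclidean (f g : V → ℝ) :
    inner ℝ (toEuclidean H f) (toEuclidean H g) = inn H f g := by
  refine Finset.sum_congr rfl fun x _ => ?_
  simp only [toEuclidean, LinearMap.coe_mk, AddHom.coe_mk, PiLp.toLp_apply, RCLike.inner_apply,
    conj_trivial]
  rw [div_mul_div_comm, mul_comm (g x), Real.mul_self_sqrt (deg_nonneg H x)]

lemma norm_toEuclidean_sq (f : V → ℝ) : ‖toEuclidean H f‖ ^ 2 = inn H f f := by
  rw [← real_inner_self_eq_norm_sq, inner_toEuclidean]

/-- `max_{b ∈ B_e} bᵀu`, with junk value `0` when `e = ∅`. -/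
def osc (e : Finset V) (u : V → ℝ) : ℝ :=
  if h : e.Nonempty then (e ×ˢ e).sup' (h.product h) fun p => u p.1 - u p.2 else 0

lemma osc_eq {e : Finset V} (he : e.Nonempty) (u : V → ℝ) :
    osc e u = (e ×ˢ e).sup' (he.product he) fun p => u p.1 - u p.2 := dif_pos he

lemma sub_le_osc {e : Finset V} {x y : V} (hx : x ∈ e) (hy : y ∈ e) (u : V → ℝ) :
    u x - u y ≤ osc e u := by
  rw [osc_eq ⟨x, hx⟩]
  exact Finset.le_sup' (fun p : V × V => u p.1 - u p.2) (Finset.mk_mem_product hx hy)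

lemma osc_le {e : Finset V} (he : e.Nonempty) {u : V → ℝ} {c : ℝ}
    (h : ∀ x ∈ e, ∀ y ∈ e, u x - u y ≤ c) : osc e u ≤ c := by
  rw [osc_eq he]
  exact Finset.sup'_le _ _ fun p hp => h _ (Finset.mem_product.1 hp).1 _ (Finset.mem_product.1 hp).2

lemma exists_osc_eq {e : Finset V} (he : e.Nonempty) (u : V → ℝ) :
    ∃ x ∈ e, ∃ y ∈ e, u x - u y = osc e u := by
  obtain ⟨p, hp, hval⟩ := Finset.exists_mem_eq_sup' (he.product he) fun p : V × V => u p.1 - u p.2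
  exact ⟨p.1, (Finset.mem_product.1 hp).1, p.2, (Finset.mem_product.1 hp).2,
    by rw [osc_eq he, hval]⟩

lemma osc_nonneg {e : Finset V} (he : e.Nonempty) (u : V → ℝ) : 0 ≤ osc e u := by
  obtain ⟨x, hx⟩ := he
  simpa using sub_le_osc hx hx u

lemma continuous_osc {e : Finset V} (he : e.Nonempty) : Continuous (osc e) := by
  simp only [funext (osc_eq he)]
  exact Continuous.finset_sup'_apply _ fun p _ => (continuous_apply p.1).sub (continuous_apply p.2)

lemma delta_sub_mem_Bp {e : Finset V} {x y : V} (hx : x ∈ e) (hy : y ∈ e) :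
    delta x - delta y ∈ Bp e :=
  subset_convexHull ℝ _ ⟨x, hx, y, hy, rfl⟩

lemma isLinearMap_dot (u : V → ℝ) : IsLinearMap ℝ fun b : V → ℝ => dot b u :=
  ⟨fun a b => add_dotProduct a b u, fun c a => smul_dotProduct c a u⟩

lemma dot_le_osc_of_mem_Bp {e : Finset V} {b : V → ℝ} (hb : b ∈ Bp e) (u : V → ℝ) :
    dot b u ≤ osc e u := by
  refine convexHull_min ?_ (convex_halfSpace_le (isLinearMap_dot u) _) hb
  rintro _ ⟨x, hx, y, hy, rfl⟩
  simpa only [Set.mem_ofPred_eq, dot_delta_sub] using sub_le_osc hx hy u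

lemma isCompact_Bp (e : Finset V) : IsCompact (Bp e) := by
  have hfin : {b : V → ℝ | ∃ x ∈ e, ∃ y ∈ e, b = delta x - delta y}.Finite := by
    refine ((e ×ˢ e).finite_toSet.image fun p => delta p.1 - delta p.2).subset ?_
    rintro _ ⟨x, hx, y, hy, rfl⟩
    exact ⟨(x, y), Finset.mk_mem_product hx hy, rfl⟩
  exact hfin.isCompact_convexHull (𝕜 := ℝ)

/-- `argmax_{b ∈ B_e} bᵀu`. -/
def face (e : Finset V) (u : V → ℝ) : Set (V → ℝ) := {b ∈ Bp e | dot b u = osc e u}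

lemma convex_face (e : Finset V) (u : V → ℝ) : Convex ℝ (face e u) :=
  (convex_convexHull ℝ _).inter (convex_hyperplane (isLinearMap_dot u) _)

lemma isCompact_face (e : Finset V) (u : V → ℝ) : IsCompact (face e u) :=
  (isCompact_Bp e).inter_right (isClosed_eq (isLinearMap_dot u).mk'.continuous_of_finiteDimensional
    continuous_const)

lemma delta_sub_mem_face {e : Finset V} {x y : V} {u : V → ℝ} (hx : x ∈ e) (hy : y ∈ e)
    (hxy : u x - u y = osc e u) : delta x - delta y ∈ face e u :=
  ⟨delta_sub_mem_Bp hx hy, by rw [dot_delta_sub, hxy]⟩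

lemma mem_Lap_iff {u h : V → ℝ} :
    h ∈ Lap H u ↔ ∃ b : Finset V → V → ℝ, (∀ e ∈ H.E, b e ∈ face e u) ∧
      h = ∑ e ∈ H.E, (H.w e * osc e u) • b e := by
  have hmax : ∀ e ∈ H.E, ∀ b ∈ Bp e,
      (∀ b' ∈ Bp e, dot b' u ≤ dot b u) ↔ dot b u = osc e u := fun e he b hb => by
    obtain ⟨x, hx, y, hy, hxy⟩ := exists_osc_eq (H.e_nonempty e he) u
    refine ⟨fun h => (dot_le_osc_of_mem_Bp hb u).antisymm ?_, fun h b' hb' => ?_⟩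
    · simpa only [dot_delta_sub, hxy] using h _ (delta_sub_mem_Bp hx hy)
    · exact h ▸ dot_le_osc_of_mem_Bp hb' u
  constructor
  · rintro ⟨b, hb, rfl⟩
    have hosc e he : dot (b e) u = osc e u := (hmax e he _ (hb e he).1).1 (hb e he).2
    exact ⟨b, fun e he => ⟨(hb e he).1, hosc e he⟩,
      Finset.sum_congr rfl fun e he => by rw [hosc e he]⟩
  · rintro ⟨b, hb, rfl⟩
    exact ⟨b, fun e he => ⟨(hb e he).1, (hmax e he _ (hb e he).1).2 (hb e he).2⟩,
      Finset.sum_congr rfl fun e he => by rw [(hb e he).2]⟩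

lemma Lap_nonempty (H : Hypergraph V) (u : V → ℝ) : (Lap H u).Nonempty := by
  have hsel : ∀ e ∈ H.E, ∃ b, b ∈ face e u := fun e he => by
    obtain ⟨x, hx, y, hy, hxy⟩ := exists_osc_eq (H.e_nonempty e he) u
    exact ⟨_, delta_sub_mem_face hx hy hxy⟩
  choose! b hb using hsel
  exact ⟨_, mem_Lap_iff.2 ⟨b, hb, rfl⟩⟩

lemma dot_osc_smul_sub_nonneg {e : Finset V} (he : e.Nonempty) {u u' b c : V → ℝ}
    (hb : b ∈ face e u) (hc : c ∈ face e u') :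
    0 ≤ dot (osc e u • b - osc e u' • c) (u - u') := by
  obtain ⟨hbB, hbu⟩ := hb
  obtain ⟨hcB, hcu⟩ := hc
  have hbu' := dot_le_osc_of_mem_Bp hbB u'
  have hcu' := dot_le_osc_of_mem_Bp hcB u
  have hosc := osc_nonneg he u
  have hosc' := osc_nonneg he u'
  -- the expression is at least `(osc e u - osc e u')²`
  simp only [dot_eq_dotProduct, sub_dotProduct, dotProduct_sub, smul_dotProduct, smul_eq_mul]
    at *
  rw [hbu, hcu]
  nlinarith [sq_nonneg (osc e u - osc e u')]

lemma Lap_monotone {u u' p q : V → ℝ} (hp : p ∈ Lap H u) (hq : q ∈ Lap H u') :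
    0 ≤ dot (p - q) (u - u') := by
  obtain ⟨b, hb, rfl⟩ := mem_Lap_iff.1 hp
  obtain ⟨c, hc, rfl⟩ := mem_Lap_iff.1 hq
  rw [← Finset.sum_sub_distrib, dot_eq_dotProduct, sum_dotProduct]
  refine Finset.sum_nonneg fun e he => ?_
  rw [mul_smul, mul_smul, ← smul_sub, smul_dotProduct, smul_eq_mul]
  exact mul_nonneg (H.w_pos e he).le
    (dot_osc_smul_sub_nonneg (H.e_nonempty e he) (hb e he) (hc e he))

lemma NL_monotone {g₁ g₂ h₁ h₂ : V → ℝ} (hh₁ : h₁ ∈ NL H g₁) (hh₂ : h₂ ∈ NL H g₂) :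
    0 ≤ inner ℝ (toEuclidean H h₁ - toEuclidean H h₂) (toEuclidean H g₁ - toEuclidean H g₂) := by
  rw [← map_sub, ← map_sub, inner_toEuclidean, inn_eq_dot]
  convert Lap_monotone hh₁ hh₂ using 2
  ext x
  simp [Dinv, sub_div]

lemma gdist_le_one {e : Finset V} (he : e ∈ H.E) {x y : V} (hx : x ∈ e) (hy : y ∈ e) :
    gdist H x y ≤ 1 := by
  have hchain : chainProp H x y 1 :=
    ⟨fun i => if i = 0 then x else y, rfl, rfl, fun i hi => by
      obtain rfl := Nat.lt_one_iff.1 hi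
      exact ⟨e, he, hx, hy⟩⟩
  unfold gdist hdistN
  exact_mod_cast Nat.sInf_le hchain

lemma osc_Dinv_le_one {f : V → ℝ} (hf : f ∈ Lip1 H) {e : Finset V} (he : e ∈ H.E) :
    osc e (Dinv H f) ≤ 1 :=
  osc_le (H.e_nonempty e he) fun x hx y hy =>
    inn_delta_sub (H := H) f x y ▸ (hf x y).trans (gdist_le_one he hx hy)

lemma sum_w_mul_sum_eq (φ : V → ℝ) :
    ∑ e ∈ H.E, H.w e * ∑ z ∈ e, φ z = ∑ z, deg H z * φ z := by
  simp only [deg, Finset.sum_mul, ite_mul, zero_mul, Finset.mul_sum]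
  rw [Finset.sum_comm]
  refine Finset.sum_congr rfl fun e _ => ?_
  rw [← Finset.sum_filter, Finset.filter_mem_eq_inter, Finset.univ_inter]

lemma vol_nonneg (H : Hypergraph V) : 0 ≤ vol H :=
  Finset.sum_nonneg fun x _ => deg_nonneg H x

lemma sum_w_le_vol (H : Hypergraph V) : ∑ e ∈ H.E, H.w e ≤ vol H := by
  calc ∑ e ∈ H.E, H.w e ≤ ∑ e ∈ H.E, H.w e * ∑ _z ∈ e, (1 : ℝ) :=
        Finset.sum_le_sum fun e he => le_mul_of_one_le_right (H.w_pos e he).le <| by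
          simpa using Finset.card_pos.2 (H.e_nonempty e he)
    _ = vol H := by simp only [sum_w_mul_sum_eq, mul_one, vol]

lemma osc_sq_le_two_mul_sum {e : Finset V} (he : e.Nonempty) (k : V → ℝ) :
    osc e k ^ 2 ≤ 2 * ∑ z ∈ e, k z ^ 2 := by
  obtain ⟨x, hx, y, hy, hxy⟩ := exists_osc_eq he k
  have hsum : 0 ≤ ∑ z ∈ e, k z ^ 2 := Finset.sum_nonneg fun z _ => sq_nonneg _
  rw [← hxy]
  rcases eq_or_ne x y with rfl | hne
  · simpa using hsum
  · have hpair : k x ^ 2 + k y ^ 2 ≤ ∑ z ∈ e, k z ^ 2 := by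
      rw [← Finset.sum_pair (f := fun z => k z ^ 2) hne]
      exact Finset.sum_le_sum_of_subset_of_nonneg (Finset.insert_subset hx (by simpa using hy))
        fun z _ _ => sq_nonneg _
    nlinarith [sq_nonneg (k x + k y)]

lemma sum_w_osc_sq_le (h : V → ℝ) :
    ∑ e ∈ H.E, H.w e * osc e (Dinv H h) ^ 2 ≤ 2 * inn H h h := by
  calc ∑ e ∈ H.E, H.w e * osc e (Dinv H h) ^ 2
      ≤ ∑ e ∈ H.E, H.w e * (2 * ∑ z ∈ e, Dinv H h z ^ 2) :=
        Finset.sum_le_sum fun e he => mul_le_mul_of_nonneg_left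
          (osc_sq_le_two_mul_sum (H.e_nonempty e he) _) (H.w_pos e he).le
    _ = 2 * ∑ z, deg H z * Dinv H h z ^ 2 := by
        rw [← sum_w_mul_sum_eq, Finset.mul_sum]
        exact Finset.sum_congr rfl fun e _ => by ring
    _ = 2 * inn H h h := by
        congr 1
        refine Finset.sum_congr rfl fun z _ => ?_
        rcases eq_or_ne (deg H z) 0 with hz | hz
        · simp [Dinv, hz]
        · simp only [Dinv]
          field_simp

lemma inn_self_le_sum_w_osc {f h : V → ℝ} (hf : f ∈ Lip1 H) (hh : h ∈ NL H f) :
    inn H h h ≤ ∑ e ∈ H.E, H.w e * osc e (Dinv H h) := by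
  obtain ⟨b, hb, hh_eq⟩ := mem_Lap_iff.1 hh
  rw [inn_eq_dot, dot_eq_dotProduct]
  nth_rewrite 1 [hh_eq]
  rw [sum_dotProduct]
  refine Finset.sum_le_sum fun e he => ?_
  rw [smul_dotProduct, smul_eq_mul, mul_assoc]
  refine mul_le_mul_of_nonneg_left ?_ (H.w_pos e he).le
  calc osc e (Dinv H f) * (b e ⬝ᵥ Dinv H h) ≤ osc e (Dinv H f) * osc e (Dinv H h) :=
        mul_le_mul_of_nonneg_left (dot_le_osc_of_mem_Bp (hb e he).1 _)
          (osc_nonneg (H.e_nonempty e he) _)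
    _ ≤ osc e (Dinv H h) :=
        mul_le_of_le_one_left (osc_nonneg (H.e_nonempty e he) _) (osc_Dinv_le_one hf he)

lemma norm_toEuclidean_le_of_mem_NL {f h : V → ℝ} (hf : f ∈ Lip1 H) (hh : h ∈ NL H f) :
    ‖toEuclidean H h‖ ≤ Real.sqrt (2 * vol H) := by
  set S := ∑ e ∈ H.E, H.w e * osc e (Dinv H h)
  have hS : 0 ≤ S := Finset.sum_nonneg fun e he =>
    mul_nonneg (H.w_pos e he).le (osc_nonneg (H.e_nonempty e he) _)
  have hnorm : inn H h h ≤ S := inn_self_le_sum_w_osc hf hh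
  have hCS : S ^ 2 ≤ vol H * (2 * S) := by
    calc S ^ 2 ≤ (∑ e ∈ H.E, H.w e) * ∑ e ∈ H.E, H.w e * osc e (Dinv H h) ^ 2 :=
          Finset.sum_sq_le_sum_mul_sum_of_sq_le_mul _ (fun e he => (H.w_pos e he).le)
            (fun e he => mul_nonneg (H.w_pos e he).le (sq_nonneg _)) fun e _ => le_of_eq (by ring)
      _ ≤ vol H * (2 * S) :=
          mul_le_mul (sum_w_le_vol H) ((sum_w_osc_sq_le h).trans (by linarith))
            (Finset.sum_nonneg fun e he => mul_nonneg (H.w_pos e he).le (sq_nonneg _))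
            (vol_nonneg H)
  have hSvol : S ≤ 2 * vol H := by nlinarith [vol_nonneg H]
  exact Real.le_sqrt_of_sq_le ((norm_toEuclidean_sq h).trans_le (hnorm.trans hSvol))

/-- Danskin's formula for the finite maximum `osc e`, as a one-sided bound: the derivative in
direction `v` is attained at an active pair maximising `v x - v y`. -/
lemma exists_active_pair_eventually_osc_add_smul_le {e : Finset V} (he : e.Nonempty)
    (u v : V → ℝ) : ∃ x ∈ e, ∃ y ∈ e, u x - u y = osc e u ∧
      ∀ᶠ t in 𝓝[>] (0 : ℝ), osc e (u + t • v) ≤ osc e u + t * (v x - v y) := by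
  obtain ⟨p, hp, hpmax⟩ := Finset.exists_max_image
    ((e ×ˢ e).filter fun p : V × V => u p.1 - u p.2 = osc e u) (fun p => v p.1 - v p.2)
    (by obtain ⟨x, hx, y, hy, hxy⟩ := exists_osc_eq he u
        exact ⟨(x, y), Finset.mem_filter.2 ⟨Finset.mk_mem_product hx hy, hxy⟩⟩)
  obtain ⟨hpe, hpact⟩ := Finset.mem_filter.1 hp
  refine ⟨p.1, (Finset.mem_product.1 hpe).1, p.2, (Finset.mem_product.1 hpe).2, hpact, ?_⟩
  have hpairs : ∀ q ∈ e ×ˢ e, ∀ᶠ t in 𝓝[>] (0 : ℝ),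
      u q.1 - u q.2 + t * (v q.1 - v q.2) ≤ osc e u + t * (v p.1 - v p.2) := by
    intro q hq
    rcases (sub_le_osc (Finset.mem_product.1 hq).1 (Finset.mem_product.1 hq).2 u).eq_or_lt
      with hact | hlt
    · have hvq := hpmax q (Finset.mem_filter.2 ⟨hq, hact⟩)
      filter_upwards [self_mem_nhdsWithin] with t (ht : 0 < t)
      nlinarith
    · have hlim : Tendsto (fun t : ℝ => u q.1 - u q.2 + t * (v q.1 - v q.2) - t * (v p.1 - v p.2))
          (𝓝 0) (𝓝 (u q.1 - u q.2)) :=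
        (by fun_prop : Continuous fun t : ℝ =>
          u q.1 - u q.2 + t * (v q.1 - v q.2) - t * (v p.1 - v p.2)).tendsto' 0 _ (by simp)
      filter_upwards [nhdsWithin_le_nhds (hlim.eventually (eventually_lt_nhds hlt))] with t ht
      linarith
  filter_upwards [(Filter.eventually_all_finset _).2 hpairs] with t ht
  refine osc_le he fun x hx y hy => ?_
  simpa [mul_sub, add_sub_add_comm] using ht (x, y) (Finset.mk_mem_product hx hy)

/-- `λ Q(D⁻¹ g) + ‖g - f‖² / 2` in the variable `u = D⁻¹ g`, up to a constant. -/
def resolventEnergy (H : Hypergraph V) (l : ℝ) (f u : V → ℝ) : ℝ :=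
  ∑ e : H.E, l / 2 * H.w e * osc e u ^ 2 + ∑ x, (deg H x * u x ^ 2 / 2 - f x * u x)

lemma continuous_resolventEnergy (H : Hypergraph V) (l : ℝ) (f : V → ℝ) :
    Continuous (resolventEnergy H l f) :=
  (continuous_finsetSum Finset.univ fun (e : H.E) _ =>
      continuous_const.mul ((continuous_osc (H.e_nonempty e e.2)).pow 2)).add
    (continuous_finsetSum Finset.univ fun (x : V) _ => by fun_prop)

lemma tendsto_resolventEnergy (hdeg : ∀ x : V, 0 < deg H x) {l : ℝ} (hl : 0 ≤ l)
    (f : V → ℝ) : Tendsto (resolventEnergy H l f) (cocompact _) atTop := by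
  obtain ⟨c, hc, hcdeg⟩ : ∃ c > 0, ∀ x, c ≤ deg H x := by
    rcases isEmpty_or_nonempty V with hV | hV
    · exact ⟨1, one_pos, fun x => isEmptyElim x⟩
    · obtain ⟨x₀, hx₀⟩ := Finite.exists_min (deg H)
      exact ⟨deg H x₀, hdeg x₀, hx₀⟩
  set F := ∑ x, |f x|
  have hbound : ∀ u : V → ℝ, ‖u‖ * (c / 2 * ‖u‖ - F) ≤ resolventEnergy H l f u := by
    intro u
    have hcoord : ∀ x, |u x| ≤ ‖u‖ := fun x => norm_le_pi_norm u x
    have hnorm : ‖u‖ ^ 2 ≤ ∑ x, u x ^ 2 := by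
      have hsqrt : ‖u‖ ≤ Real.sqrt (∑ x, u x ^ 2) :=
        (pi_norm_le_iff_of_nonneg (Real.sqrt_nonneg _)).2 fun x => Real.abs_le_sqrt <|
          Finset.single_le_sum (f := fun x => u x ^ 2) (fun x _ => sq_nonneg _) (Finset.mem_univ x)
      calc ‖u‖ ^ 2 ≤ Real.sqrt (∑ x, u x ^ 2) ^ 2 := by gcongr
        _ = ∑ x, u x ^ 2 := Real.sq_sqrt (Finset.sum_nonneg fun x _ => sq_nonneg _)
    have hedge : 0 ≤ ∑ e : H.E, l / 2 * H.w e * osc e u ^ 2 := Finset.sum_nonneg fun e _ =>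
      mul_nonneg (mul_nonneg (by positivity) (H.w_pos e e.2).le) (sq_nonneg _)
    have hquad : c * ∑ x, u x ^ 2 ≤ ∑ x, deg H x * u x ^ 2 := by
      rw [Finset.mul_sum]
      exact Finset.sum_le_sum fun x _ => mul_le_mul_of_nonneg_right (hcdeg x) (sq_nonneg _)
    have hlin : ∑ x, f x * u x ≤ F * ‖u‖ := by
      rw [Finset.sum_mul]
      exact Finset.sum_le_sum fun x _ => (le_abs_self _).trans <| by
        rw [abs_mul]; exact mul_le_mul_of_nonneg_left (hcoord x) (abs_nonneg _)
    have hsplit : ∑ x, (deg H x * u x ^ 2 / 2 - f x * u x)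
        = (∑ x, deg H x * u x ^ 2) / 2 - ∑ x, f x * u x := by
      rw [Finset.sum_sub_distrib, Finset.sum_div]
    rw [resolventEnergy, hsplit]
    nlinarith
  have hquadratic : Tendsto (fun N : ℝ => N * (c / 2 * N - F)) atTop atTop :=
    tendsto_id.atTop_mul_atTop₀ <| tendsto_atTop_add_const_right _ _ <|
      tendsto_id.const_mul_atTop (by positivity)
  exact tendsto_atTop_mono hbound (hquadratic.comp tendsto_norm_cocompact_atTop)

lemma eventually_resolventEnergy_add_smul_le {l : ℝ} (hl : 0 ≤ l) (f : V → ℝ) {u v : V → ℝ}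
    {A : H.E → ℝ} (hA : ∀ e : H.E, ∀ᶠ t in 𝓝[>] (0 : ℝ), osc e (u + t • v) ≤ osc e u + t * A e) :
    ∃ C, ∀ᶠ t in 𝓝[>] (0 : ℝ), resolventEnergy H l f (u + t • v) ≤ resolventEnergy H l f u +
      t * (∑ e : H.E, l * H.w e * osc e u * A e + ∑ x, (deg H x * u x - f x) * v x) +
      t ^ 2 * C := by
  refine ⟨∑ e : H.E, l / 2 * H.w e * A e ^ 2 + ∑ x, deg H x * v x ^ 2 / 2, ?_⟩
  filter_upwards [Filter.eventually_all.2 hA] with t ht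
  have hedge := sum_le_sum_add_mul_add_sq_mul (s := Finset.univ) (t := t)
    (X := fun e : H.E => l / 2 * H.w e * osc e (u + t • v) ^ 2)
    (a := fun e => l / 2 * H.w e * osc e u ^ 2) (b := fun e => l * H.w e * osc e u * A e)
    (c := fun e => l / 2 * H.w e * A e ^ 2) fun e _ => by
      have hsq : osc e (u + t • v) ^ 2 ≤ (osc e u + t * A e) ^ 2 :=
        pow_le_pow_left₀ (osc_nonneg (H.e_nonempty e e.2) _) (ht e) 2
      have hcoef : 0 ≤ l / 2 * H.w e := mul_nonneg (by positivity) (H.w_pos e e.2).le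
      nlinarith [mul_le_mul_of_nonneg_left hsq hcoef]
  have hvertex := sum_le_sum_add_mul_add_sq_mul (s := Finset.univ) (t := t)
    (X := fun x => deg H x * (u + t • v) x ^ 2 / 2 - f x * (u + t • v) x)
    (a := fun x => deg H x * u x ^ 2 / 2 - f x * u x) (b := fun x => (deg H x * u x - f x) * v x)
    (c := fun x => deg H x * v x ^ 2 / 2) fun x _ =>
      le_of_eq (by simp only [Pi.add_apply, Pi.smul_apply, smul_eq_mul]; ring)
  simp only [resolventEnergy]
  linear_combination hedge + hvertex

lemma strongDual_apply_eq_dot (φ : StrongDual ℝ (V → ℝ)) (a : V → ℝ) :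
    φ a = dot a fun i => φ fun j => if i = j then 1 else 0 := by
  simpa [dot] using (φ : (V → ℝ) →ₗ[ℝ] ℝ).pi_apply_eq_sum_univ a

def edgeSum (H : Hypergraph V) (l : ℝ) (u : V → ℝ) : (H.E → V → ℝ) →ₗ[ℝ] V → ℝ :=
  ∑ e : H.E, (l * H.w e * osc e u) • LinearMap.proj e

lemma edgeSum_apply (l : ℝ) (u : V → ℝ) (b : H.E → V → ℝ) :
    edgeSum H l u b = ∑ e : H.E, (l * H.w e * osc e u) • b e := by
  simp [edgeSum]

/-- `λ L(u)`, as the image of the compact convex set `∏_e face e u`. -/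
def scaledLap (H : Hypergraph V) (l : ℝ) (u : V → ℝ) : Set (V → ℝ) :=
  edgeSum H l u '' Set.pi Set.univ fun e => face e.1 u

lemma convex_scaledLap (H : Hypergraph V) (l : ℝ) (u : V → ℝ) : Convex ℝ (scaledLap H l u) :=
  (convex_pi fun (e : H.E) _ => convex_face e.1 u).linear_image _

lemma isClosed_scaledLap (H : Hypergraph V) (l : ℝ) (u : V → ℝ) : IsClosed (scaledLap H l u) :=
  ((isCompact_univ_pi fun (e : H.E) => isCompact_face e.1 u).image
    (LinearMap.continuous_of_finiteDimensional _)).isClosed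

lemma exists_mem_Lap_of_mem_scaledLap {l : ℝ} {u p : V → ℝ} (hp : p ∈ scaledLap H l u) :
    ∃ h ∈ Lap H u, p = l • h := by
  obtain ⟨b, hb, rfl⟩ := hp
  let b' : Finset V → V → ℝ := fun e => if he : e ∈ H.E then b ⟨e, he⟩ else 0
  refine ⟨∑ e ∈ H.E, (H.w e * osc e u) • b' e,
    mem_Lap_iff.2 ⟨b', fun e he => by simpa [b', he] using hb ⟨e, he⟩ trivial, rfl⟩, ?_⟩
  rw [edgeSum_apply, Finset.smul_sum, ← Finset.sum_coe_sort H.E]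
  exact Finset.sum_congr rfl fun e _ => by simp [b', e.2, smul_smul, mul_assoc]

/-- Otherwise a hyperplane separating `f - D u₀` from `λ L(u₀)` gives a direction of first-order
descent of the energy. -/
lemma sub_mem_scaledLap_of_isMin {l : ℝ} (hl : 0 ≤ l) {f u₀ : V → ℝ}
    (hmin : ∀ u, resolventEnergy H l f u₀ ≤ resolventEnergy H l f u) :
    f - (fun x => deg H x * u₀ x) ∈ scaledLap H l u₀ := by
  by_contra hp
  obtain ⟨φ, c, hlt, hgt⟩ :=
    geometric_hahn_banach_closed_point (convex_scaledLap H l u₀) (isClosed_scaledLap H l u₀) hp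
  set v : V → ℝ := fun i => φ fun j => if i = j then 1 else 0
  choose x hx y hy hact hev using fun e : H.E =>
    exists_active_pair_eventually_osc_add_smul_le (H.e_nonempty e e.2) u₀ v
  let b : H.E → V → ℝ := fun e => delta (x e) - delta (y e)
  obtain ⟨C, hC⟩ := eventually_resolventEnergy_add_smul_le hl f hev
  have hdescent : 0 ≤ ∑ e : H.E, l * H.w e * osc e u₀ * (v (x e) - v (y e)) +
      ∑ i, (deg H i * u₀ i - f i) * v i := nonneg_of_eventually_nonneg_mul_add_sq_mul (C := C) <|
    hC.mono fun t ht => by linarith [hmin (u₀ + t • v)]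
  have hsep := (hlt _ ⟨b, fun e _ => delta_sub_mem_face (hx e) (hy e) (hact e), rfl⟩).trans hgt
  have hφb : φ (edgeSum H l u₀ b) = ∑ e : H.E, l * H.w e * osc e u₀ * (v (x e) - v (y e)) := by
    rw [strongDual_apply_eq_dot, edgeSum_apply, dot_eq_dotProduct, sum_dotProduct]
    exact Finset.sum_congr rfl fun e _ => by
      rw [smul_dotProduct, ← dot_eq_dotProduct, dot_delta_sub, smul_eq_mul]
  have hφp : φ (f - fun x => deg H x * u₀ x) = - ∑ i, (deg H i * u₀ i - f i) * v i := by
    rw [strongDual_apply_eq_dot, ← Finset.sum_neg_distrib]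
    exact Finset.sum_congr rfl fun i _ => by simp only [Pi.sub_apply]; ring
  linarith

lemma exists_resolvent (hdeg : ∀ x : V, 0 < deg H x) {l : ℝ} (hl : 0 ≤ l) (f : V → ℝ) :
    ∃ g, ∃ h ∈ NL H g, f = g + l • h := by
  obtain ⟨u₀, hu₀⟩ := (continuous_resolventEnergy H l f).exists_forall_le
    (tendsto_resolventEnergy hdeg hl f)
  obtain ⟨h, hh, hf⟩ := exists_mem_Lap_of_mem_scaledLap (sub_mem_scaledLap_of_isMin hl hu₀)
  have hDinv : Dinv H (fun x => deg H x * u₀ x) = u₀ :=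
    funext fun x => mul_div_cancel_left₀ _ (hdeg x).ne'
  exact ⟨_, h, by rwa [NL, hDinv], by rw [← hf, add_sub_cancel]⟩

lemma resolvent_spec (hdeg : ∀ x : V, 0 < deg H x) {l : ℝ} (hl : 0 ≤ l) (f : V → ℝ) :
    ∃ h ∈ NL H (Resolvent H l f), f = Resolvent H l f + l • h :=
  Classical.epsilon_spec (exists_resolvent hdeg hl f)

lemma resolvent_zero (hdeg : ∀ x : V, 0 < deg H x) (f : V → ℝ) : Resolvent H 0 f = f := by
  obtain ⟨h, -, hf⟩ := resolvent_spec hdeg le_rfl f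
  simpa using hf.symm

lemma norm_toEuclidean_resolvent_sub_le (hdeg : ∀ x : V, 0 < deg H x) {l m : ℝ} (hl : 0 < l)
    (hm : 0 ≤ m) {f : V → ℝ} (hf : f ∈ Lip1 H) :
    ‖toEuclidean H (Resolvent H l f) - toEuclidean H (Resolvent H m f)‖ ≤
      |l - m| * Real.sqrt (2 * vol H) := by
  obtain ⟨hL, hLmem, hfL⟩ := resolvent_spec hdeg hl.le f
  obtain ⟨hM, hMmem, hfM⟩ := resolvent_spec hdeg hm f
  obtain ⟨h₀, h₀mem⟩ := Lap_nonempty H (Dinv H f)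
  have hT : ∀ {k : ℝ} {g h : V → ℝ}, f = g + k • h →
      toEuclidean H f = toEuclidean H g + k • toEuclidean H h := fun hfgh => by
    rw [hfgh, map_add, map_smul]
  have hLnorm : ‖toEuclidean H hL‖ ≤ Real.sqrt (2 * vol H) :=
    (norm_le_of_eq_add_smul_of_inner_nonneg hl (hT hfL) (NL_monotone hLmem h₀mem)).trans
      (norm_toEuclidean_le_of_mem_NL hf h₀mem)
  refine (norm_sub_le_of_add_smul_eq hm ((hT hfL).symm.trans (hT hfM))
    (NL_monotone hLmem hMmem)).trans ?_
  exact mul_le_mul_of_nonneg_left hLnorm (abs_nonneg _)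

lemma norm_toEuclidean_delta_sub_le (x y : V) :
    ‖toEuclidean H (delta x - delta y)‖ ≤ Real.sqrt 2 * ⨆ z : V, 1 / Real.sqrt (deg H z) := by
  set M := ⨆ z : V, 1 / Real.sqrt (deg H z)
  have hM : 0 ≤ M := Real.iSup_nonneg fun z => by positivity
  have hdelta : ∀ z, ‖toEuclidean H (delta z)‖ ^ 2 ≤ M ^ 2 := fun z => by
    have hinn : inn H (delta z) (delta z) = (1 / Real.sqrt (deg H z)) ^ 2 := by
      rw [div_pow, Real.sq_sqrt (deg_nonneg H z), inn, Finset.sum_eq_single z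
        (fun w _ hw => by simp [delta, hw]) (by simp)]
      simp [delta]
    rw [norm_toEuclidean_sq, hinn]
    exact pow_le_pow_left₀ (by positivity)
      (le_ciSup (Set.finite_range fun z => 1 / Real.sqrt (deg H z)).bddAbove z) 2
  have hcross : 0 ≤ inner ℝ (toEuclidean H (delta x)) (toEuclidean H (delta y)) := by
    rw [inner_toEuclidean]
    exact Finset.sum_nonneg fun z _ => div_nonneg
      (by unfold delta; split_ifs <;> norm_num) (deg_nonneg H z)
  have hsq : ‖toEuclidean H (delta x - delta y)‖ ^ 2 ≤ (Real.sqrt 2 * M) ^ 2 := by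
    rw [map_sub, norm_sub_sq_real, mul_pow, Real.sq_sqrt zero_le_two]
    linarith [hdelta x, hdelta y]
  exact (pow_le_pow_iff_left₀ (norm_nonneg _) (by positivity) two_ne_zero).1 hsq

lemma inn_resolvent_le_add (hdeg : ∀ x : V, 0 < deg H x) {l m : ℝ} (hl : 0 < l) (hm : 0 ≤ m)
    {f : V → ℝ} (hf : f ∈ Lip1 H) (x y : V) :
    inn H (Resolvent H l f) (delta x - delta y) ≤ inn H (Resolvent H m f) (delta x - delta y) +
      2 * (⨆ z : V, 1 / Real.sqrt (deg H z)) * Real.sqrt (vol H) * |l - m| := by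
  have hprod := mul_le_mul (norm_toEuclidean_resolvent_sub_le hdeg hl hm hf)
    (norm_toEuclidean_delta_sub_le (H := H) x y) (norm_nonneg _) (by positivity)
  have hconst : |l - m| * Real.sqrt (2 * vol H) *
      (Real.sqrt 2 * ⨆ z : V, 1 / Real.sqrt (deg H z)) =
      2 * (⨆ z : V, 1 / Real.sqrt (deg H z)) * Real.sqrt (vol H) * |l - m| := by
    rw [Real.sqrt_mul zero_le_two]
    linear_combination (|l - m| * Real.sqrt (vol H) * ⨆ z : V, 1 / Real.sqrt (deg H z)) *
      Real.mul_self_sqrt zero_le_two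
  have hcs := real_inner_le_norm (toEuclidean H (Resolvent H l f) - toEuclidean H (Resolvent H m f))
    (toEuclidean H (delta x - delta y))
  rw [inner_sub_left, inner_toEuclidean, inner_toEuclidean] at hcs
  linarith

lemma zero_mem_Lip1 (H : Hypergraph V) : (0 : V → ℝ) ∈ Lip1 H := fun x y => by
  simp [inn, gdist]

lemma KD_le_add (hdeg : ∀ x : V, 0 < deg H x) {l m : ℝ} (hl : 0 < l) (hm : 0 < m) (x y : V) :
    KD H l x y ≤ KD H m x y +
      2 * (⨆ z : V, 1 / Real.sqrt (deg H z)) * Real.sqrt (vol H) * |l - m| := by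
  refine csSup_le_csSup_add ⟨0, zero_mem_Lip1 H⟩ ?_ fun f hf =>
    inn_resolvent_le_add hdeg hl hm.le hf x y
  -- the case `μ = 0` of the same estimate bounds the `μ`-set, as `J_0 f = f`
  refine ⟨gdist H x y + 2 * (⨆ z : V, 1 / Real.sqrt (deg H z)) * Real.sqrt (vol H) * |m - 0|, ?_⟩
  rintro _ ⟨f, hf, rfl⟩
  have h := inn_resolvent_le_add hdeg hm le_rfl hf x y
  rw [resolvent_zero hdeg] at h
  linarith [hf x y]

theorem stmt10_general (H : Hypergraph V)
    (hdeg : ∀ x : V, 0 < deg H x) (l m : ℝ) (hl : 0 < l) (hm : 0 < m) (x y : V) :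
    |KD H l x y - KD H m x y| ≤
      2 * (⨆ z : V, 1 / Real.sqrt (deg H z)) * Real.sqrt (vol H) * |l - m| := by
  have hlm := KD_le_add hdeg hl hm x y
  have hml := KD_le_add hdeg hm hl x y
  rw [abs_sub_comm m l] at hml
  exact abs_sub_le_iff.2 ⟨by linarith, by linarith⟩

/-- Lipschitz dependence of `KD_λ(x,y)` on `λ`:
`|KD_λ − KD_μ| ≤ 2 M vol(V)^{1/2} |λ − μ|` with `M = max_x d_x^{-1/2}`. -/
theorem stmt10 [Nonempty V] (H : Hypergraph V) (hconn : Connected H)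
    (hdeg : ∀ x : V, 0 < deg H x) (l m : ℝ) (hl : 0 < l) (hm : 0 < m) (x y : V) :
    |KD H l x y - KD H m x y| ≤
      2 * (⨆ z : V, 1 / Real.sqrt (deg H z)) * Real.sqrt (vol H) * |l - m| :=
  stmt10_general H hdeg l m hl hm x y

end HypRicci
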